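/- arXiv:2310.09980 — 4 statements merged into one kernel-verified Lean document; each statement's English description precedes it below -/
import Mathlib

section
/- Let n ∈ ℤ≥3 and let D be a squarefree integer with D ≡ 1 (mod 4), D ≥ 5. Define F_n = (n−1)² if n is even and F_n = n² if n is odd. If D ≤ F_n, then the field K = ℚ(√D) satisfies p_K(n) > p(n). (Thus the bound F_n is optimal.) -/
noncomputable section

/-- `ω_D`, so that `(1, ω_D)` is an integral basis of `𝓞(ℚ(√D))`. -/
def omegaD (D : ℤ) : ℝ := if D % 4 = 1 then (1 + Real.sqrt D) / 2 else Real.sqrt D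

/-- The Galois conjugate `ω_D′` of `ω_D`. -/
def omegaD' (D : ℤ) : ℝ := if D % 4 = 1 then (1 - Real.sqrt D) / 2 else -(Real.sqrt D)

/-- `ξ_D = -ω_D′`. -/
def xiD (D : ℤ) : ℝ := -omegaD' D

/-- The real embedding of `𝓞 K`, an element `(x, y)` in the integral basis
`(1, ω_D)` being sent to `x + y ω_D`. -/
def emb (D : ℤ) (a : ℤ × ℤ) : ℝ := a.1 + a.2 * omegaD D

/-- The conjugate real embedding, sending `(x, y)` to `x + y ω_D′`. -/
def embConj (D : ℤ) (a : ℤ × ℤ) : ℝ := a.1 + a.2 * omegaD' D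

/-- An element of `𝓞 K` is totally positive if it and its conjugate are positive. -/
def TotPos (D : ℤ) (a : ℤ × ℤ) : Prop := 0 < emb D a ∧ 0 < embConj D a

/-- The partition function `p_K` of `K = ℚ(√D)`: the number of multisets of
totally positive integers of `K` with sum `α`. -/
def pK (D : ℤ) (α : ℤ × ℤ) : ℕ :=
  Nat.card {m : Multiset (ℤ × ℤ) // (∀ β ∈ m, TotPos D β) ∧ m.sum = α}

end

/-!
If `m = 2a + 1 ≤ n` is odd with `√D < m`, then `a + ω_D` and `a + 1 - ω_D` are totally positive
with sum `m`, so `n = (a + ω_D) + (a + 1 - ω_D) + 1 + ⋯ + 1` is a partition of `n` in `K` that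
does not come from a partition of `n` in `ℕ`. Such an `m` exists when `D ≤ F_n`, because a
squarefree `D ≥ 5` is not a square. Since `pK` is a `Nat.card`, the set of partitions must also be
shown finite: the coordinates of a totally positive summand of `α` are bounded by the trace of `α`.
-/

namespace RealQuadratic

variable {D : ℤ}

abbrev TotPosPartition (D : ℤ) (α : ℤ × ℤ) : Type :=
  {m : Multiset (ℤ × ℤ) // (∀ β ∈ m, TotPos D β) ∧ m.sum = α}

theorem emb_add (D : ℤ) (a b : ℤ × ℤ) : emb D (a + b) = emb D a + emb D b := by
  simp only [emb, Prod.fst_add, Prod.snd_add]; push_cast; ring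

theorem embConj_add (D : ℤ) (a b : ℤ × ℤ) : embConj D (a + b) = embConj D a + embConj D b := by
  simp only [embConj, Prod.fst_add, Prod.snd_add]; push_cast; ring

theorem emb_multiset_sum (D : ℤ) (m : Multiset (ℤ × ℤ)) :
    emb D m.sum = (m.map (emb D)).sum :=
  map_multiset_sum (AddMonoidHom.mk' (emb D) (emb_add D)) m

theorem embConj_multiset_sum (D : ℤ) (m : Multiset (ℤ × ℤ)) :
    embConj D m.sum = (m.map (embConj D)).sum :=
  map_multiset_sum (AddMonoidHom.mk' (embConj D) (embConj_add D)) m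

theorem emb_le_emb_sum_of_mem {m : Multiset (ℤ × ℤ)} (hm : ∀ β ∈ m, TotPos D β) {β : ℤ × ℤ}
    (hβ : β ∈ m) : emb D β ≤ emb D m.sum ∧ embConj D β ≤ embConj D m.sum := by
  rw [emb_multiset_sum, embConj_multiset_sum]
  constructor <;>
  · refine Multiset.single_le_sum (fun x hx => ?_) _ (Multiset.mem_map_of_mem _ hβ)
    obtain ⟨γ, hγ, rfl⟩ := Multiset.mem_map.mp hx
    first | exact (hm γ hγ).1.le | exact (hm γ hγ).2.le

theorem totPos_natCast {k : ℕ} (hk : 0 < k) : TotPos D ((k : ℤ), 0) := by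
  simp [TotPos, emb, embConj, hk]

/-- The trace `2x + y` of `x + y ω_D`, for `D ≡ 1 mod 4`. -/
def trace : ℤ × ℤ →+ ℤ :=
  AddMonoidHom.mk' (fun a => 2 * a.1 + a.2) fun a b => by
    simp only [Prod.fst_add, Prod.snd_add]; ring

theorem cast_trace (hmod : D % 4 = 1) (a : ℤ × ℤ) : (trace a : ℝ) = emb D a + embConj D a := by
  simp only [trace, AddMonoidHom.mk'_apply, emb, embConj, omegaD, omegaD', if_pos hmod]
  push_cast; ring

theorem emb_sub_embConj (hmod : D % 4 = 1) (a : ℤ × ℤ) :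
    emb D a - embConj D a = a.2 * Real.sqrt D := by
  simp only [emb, embConj, omegaD, omegaD', if_pos hmod]; ring

theorem one_le_trace (hmod : D % 4 = 1) {β : ℤ × ℤ} (hβ : TotPos D β) : 1 ≤ trace β := by
  have : (0 : ℝ) < trace β := by rw [cast_trace hmod]; linarith [hβ.1, hβ.2]
  exact_mod_cast this

theorem mem_box_of_totPos (hmod : D % 4 = 1) (hD : 1 ≤ D) {α β : ℤ × ℤ} (hβ : TotPos D β)
    (hle : emb D β ≤ emb D α) (hle' : embConj D β ≤ embConj D α) :
    β ∈ Finset.Icc (-trace α, -trace α) (trace α, trace α) := by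
  have htr := one_le_trace hmod hβ
  have htr_le : trace β ≤ trace α := by
    have : (trace β : ℝ) ≤ trace α := by rw [cast_trace hmod, cast_trace hmod]; linarith
    exact_mod_cast this
  have hsqrt : (1 : ℝ) ≤ Real.sqrt D := Real.one_le_sqrt.mpr (by exact_mod_cast hD)
  -- `|y| ≤ |y| √D = |emb β - embConj β| < emb α + embConj α`
  have hy : |β.2| < trace α := by
    have h : |(β.2 : ℝ)| * Real.sqrt D < trace α := by
      rw [← abs_of_pos (by linarith : (0 : ℝ) < Real.sqrt D), ← abs_mul, ← emb_sub_embConj hmod,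
        cast_trace hmod, abs_lt]
      constructor <;> linarith [hβ.1, hβ.2]
    have : (|β.2| : ℝ) < trace α := by
      nlinarith [abs_nonneg (β.2 : ℝ)]
    exact_mod_cast this
  simp only [trace, AddMonoidHom.mk'_apply] at htr htr_le hy ⊢
  rw [abs_lt] at hy
  simp only [Finset.mem_Icc, Prod.le_def]
  omega

theorem card_le_trace (hmod : D % 4 = 1) {m : Multiset (ℤ × ℤ)} (hm : ∀ β ∈ m, TotPos D β) :
    (Multiset.card m : ℤ) ≤ trace m.sum := by
  rw [map_multiset_sum]
  simpa using Multiset.card_nsmul_le_sum (s := m.map trace) (a := 1) <| by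
    simpa only [Multiset.forall_mem_map_iff] using fun β hβ => one_le_trace hmod (hm β hβ)

theorem finite_totPosPartition (hmod : D % 4 = 1) (hD : 1 ≤ D) (α : ℤ × ℤ) :
    Finite (TotPosPartition D α) := by
  refine Set.Finite.to_subtype (s := {m : Multiset (ℤ × ℤ) | (∀ β ∈ m, TotPos D β) ∧ m.sum = α}) ?_
  set box := Finset.Icc (-trace α, -trace α) (trace α, trace α)
  refine (Multiset.powerset ((trace α).toNat • box.val)).toFinset.finite_toSet.subset ?_
  rintro m ⟨hm, rfl⟩
  simp only [Finset.mem_coe, Multiset.mem_toFinset, Multiset.mem_powerset, Multiset.le_iff_count,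
    Multiset.count_nsmul]
  intro β
  by_cases hβ : β ∈ m
  · obtain ⟨hle, hle'⟩ := emb_le_emb_sum_of_mem hm hβ
    have hbox := mem_box_of_totPos hmod hD (hm β hβ) hle hle'
    rw [Multiset.count_eq_one_of_mem box.nodup hbox, mul_one]
    have := card_le_trace hmod hm
    have := Multiset.count_le_card β m
    omega
  · simp [Multiset.count_eq_zero_of_notMem hβ]

def natEmb : ℕ →+ ℤ × ℤ := (AddMonoidHom.inl ℤ ℤ).comp (Nat.castAddMonoidHom ℤ)

theorem natEmb_apply (k : ℕ) : natEmb k = ((k : ℤ), 0) := rfl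

theorem natEmb_injective : Function.Injective natEmb := fun _ _ h => by
  simpa [natEmb_apply] using h

def ofPartition {n : ℕ} (p : Nat.Partition n) :
    TotPosPartition D ((n : ℤ), 0) :=
  ⟨p.parts.map natEmb,
    by simpa only [Multiset.forall_mem_map_iff, natEmb_apply] using
      fun k hk => totPos_natCast (p.parts_pos hk),
    by rw [← map_multiset_sum, p.parts_sum, natEmb_apply]⟩

theorem ofPartition_injective {n : ℕ} : Function.Injective (ofPartition (D := D) (n := n)) :=
  fun _ _ h => Nat.Partition.ext <| Multiset.map_injective natEmb_injective (congrArg Subtype.val h)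

theorem totPos_of_sqrt_lt (hmod : D % 4 = 1) {a : ℕ}
    (ha : Real.sqrt D < 2 * a + 1) : TotPos D ((a : ℤ), 1) ∧ TotPos D ((a : ℤ) + 1, -1) := by
  have := Real.sqrt_nonneg (D : ℝ)
  simp only [TotPos, emb, embConj, omegaD, omegaD', if_pos hmod]
  push_cast
  refine ⟨⟨?_, ?_⟩, ?_, ?_⟩ <;> linarith

theorem exists_partition_not_rational (hmod : D % 4 = 1) {a n : ℕ}
    (ha : Real.sqrt D < 2 * a + 1) (han : 2 * a + 1 ≤ n) :
    ∃ m : TotPosPartition D ((n : ℤ), 0),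
      m ∉ Set.range ofPartition := by
  obtain ⟨h₁, h₂⟩ := totPos_of_sqrt_lt hmod ha
  refine ⟨⟨((a : ℤ), 1) ::ₘ ((a : ℤ) + 1, -1) ::ₘ Multiset.replicate (n - (2 * a + 1)) (1, 0),
    ?_, ?_⟩, ?_⟩
  · simp only [Multiset.mem_cons, Multiset.mem_replicate]
    rintro β (rfl | rfl | ⟨-, rfl⟩)
    exacts [h₁, h₂, totPos_natCast (k := 1) one_pos]
  · simp only [Multiset.sum_cons, Multiset.sum_replicate, Prod.smul_mk, smul_zero, nsmul_eq_mul,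
      mul_one, Prod.mk_add_mk, add_zero, Prod.ext_iff]
    constructor <;> omega
  · rintro ⟨p, hp⟩
    have : ((a : ℤ), (1 : ℤ)) ∈ (ofPartition (D := D) p).1 := by simp [hp]
    obtain ⟨k, -, hk⟩ := Multiset.mem_map.mp this
    simp [natEmb_apply] at hk

theorem lt_sq_of_squarefree {D m : ℤ} (hD : 1 < D) (hsf : Squarefree D) (h : D ≤ m ^ 2) :
    D < m ^ 2 := by
  refine h.lt_of_ne fun heq => ?_
  rcases Int.isUnit_iff.mp (hsf m ⟨1, by rw [heq]; ring⟩) with rfl | rfl <;> norm_num at heq <;>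
    omega

theorem exists_odd_le_sqrt_lt {n : ℕ} (hD : 1 < D) (hsf : Squarefree D)
    (hbound : D ≤ (if Even n then ((n : ℤ) - 1) ^ 2 else (n : ℤ) ^ 2)) :
    ∃ a : ℕ, 2 * a + 1 ≤ n ∧ Real.sqrt D < 2 * a + 1 := by
  obtain ⟨a, han, hDa⟩ : ∃ a : ℕ, 2 * a + 1 ≤ n ∧ D ≤ ((2 * a + 1 : ℕ) : ℤ) ^ 2 := by
    split_ifs at hbound with hn
    · obtain ⟨k, rfl⟩ := hn
      obtain _ | k := k
      · norm_num at hbound; omega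
      · exact ⟨k, by omega, by convert hbound using 2; push_cast; ring⟩
    · obtain ⟨k, rfl⟩ := Nat.not_even_iff_odd.mp hn
      exact ⟨k, le_rfl, hbound⟩
  refine ⟨a, han, (Real.sqrt_lt' (by positivity)).mpr ?_⟩
  exact_mod_cast lt_sq_of_squarefree hD hsf hDa

theorem card_partition_lt_pK (hmod : D % 4 = 1) (hD : 1 ≤ D) {n a : ℕ}
    (ha : Real.sqrt D < 2 * a + 1) (han : 2 * a + 1 ≤ n) :
    Fintype.card (Nat.Partition n) < pK D ((n : ℤ), 0) := by
  have := finite_totPosPartition hmod hD ((n : ℤ), 0)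
  let := Fintype.ofFinite (TotPosPartition D ((n : ℤ), 0))
  obtain ⟨m, hm⟩ := exists_partition_not_rational hmod ha han
  rw [pK, Nat.card_eq_fintype_card]
  exact Fintype.card_lt_of_injective_of_notMem _ ofPartition_injective hm

end RealQuadratic

open RealQuadratic in
theorem pK_gt_p_of_le_Fn_general (n : ℕ) (D : ℤ) (hD : 5 ≤ D)
    (hsf : Squarefree D) (hmod : D % 4 = 1)
    (hbound : D ≤ (if Even n then ((n : ℤ) - 1) ^ 2 else (n : ℤ) ^ 2)) :
    pK D ((n : ℤ), 0) > Fintype.card (Nat.Partition n) := by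
  obtain ⟨a, han, ha⟩ := exists_odd_le_sqrt_lt (by omega) hsf hbound
  exact card_partition_lt_pK hmod (by omega) ha han

theorem pK_gt_p_of_le_Fn (n : ℕ) (hn : 3 ≤ n) (D : ℤ) (hD : 5 ≤ D)
    (hsf : Squarefree D) (hmod : D % 4 = 1)
    (hbound : D ≤ (if Even n then ((n : ℤ) - 1) ^ 2 else (n : ℤ) ^ 2)) :
    pK D ((n : ℤ), 0) > Fintype.card (Nat.Partition n) :=
  pK_gt_p_of_le_Fn_general n D hD hsf hmod hbound
end

section
/- Let D ≥ 2 be a squarefree integer and K = ℚ(√D). For every n ∈ ℤ≥0, P_K(n) ≡ p_K(n) (mod 2). -/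
/-- The cumulative partition function `P_K(n) = ∑_{α ≻ 0, Tr α = 2n} p_K(α)`,
with `P_K(0) = 1`. -/
noncomputable def PK (D : ℤ) (n : ℕ) : ℕ :=
  if n = 0 then 1 else
    ∑ᶠ α ∈ {α : ℤ × ℤ | TotPos D α ∧ emb D α + embConj D α = 2 * n}, pK D α

theorem Finset.sum_eq_sum_filter_fixed_of_involutive {ι R : Type*} [Ring R] [CharP R 2]
    (s : Finset ι) (σ : ι → ι) (hσ : Function.Involutive σ) (hs : ∀ a ∈ s, σ a ∈ s)
    (f : ι → R) (hf : ∀ a, f (σ a) = f a) [DecidablePred fun a => σ a = a] :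
    ∑ a ∈ s, f a = ∑ a ∈ s with σ a = a, f a := by
  have hmoved : ∑ a ∈ s with ¬σ a = a, f a = 0 := by
    refine Finset.sum_involution (fun a _ => σ a) (fun a _ => ?_) (fun a ha _ => ?_)
      (fun a ha => ?_) (fun a _ => hσ a)
    · rw [hf]; exact CharTwo.add_self_eq_zero _
    · exact (Finset.mem_filter.1 ha).2
    · rw [Finset.mem_filter] at ha ⊢
      exact ⟨hs a ha.1, by rw [hσ a]; exact fun h => ha.2 h.symm⟩
  rw [← Finset.sum_filter_add_sum_filter_not s (fun a => σ a = a), hmoved, add_zero]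

theorem Nat.card_multiset_sum_eq_congr {M N : Type*} [AddCommMonoid M] [AddCommMonoid N]
    (e : M ≃+ N) {P : M → Prop} {Q : N → Prop} (hPQ : ∀ a, Q (e a) ↔ P a) (α : M) :
    Nat.card {m : Multiset N // (∀ b ∈ m, Q b) ∧ m.sum = e α} =
      Nat.card {m : Multiset M // (∀ a ∈ m, P a) ∧ m.sum = α} := by
  refine Nat.card_congr
    { toFun := fun m => ⟨m.1.map e.symm, ?_, ?_⟩
      invFun := fun m => ⟨m.1.map e, ?_, ?_⟩
      left_inv := fun m => Subtype.ext ?_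
      right_inv := fun m => Subtype.ext ?_ }
  · simp only [Multiset.mem_map]
    rintro _ ⟨b, hb, rfl⟩
    exact (hPQ _).1 (by simpa using m.2.1 b hb)
  · rw [← AddEquiv.coe_toAddMonoidHom, ← map_multiset_sum, m.2.2]; simp
  · simp only [Multiset.mem_map]
    rintro _ ⟨a, ha, rfl⟩
    exact (hPQ a).2 (m.2.1 a ha)
  · rw [← AddEquiv.coe_toAddMonoidHom, ← map_multiset_sum, m.2.2]
  · simp [Multiset.map_map]
  · simp [Multiset.map_map]

section RealQuadratic

variable {D : ℤ}

/-- The trace of `ω_D`. -/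
def omegaTrace (D : ℤ) : ℤ := if D % 4 = 1 then 1 else 0

lemma omegaTrace_cast : (omegaTrace D : ℝ) = omegaD D + omegaD' D := by
  unfold omegaTrace omegaD omegaD'
  split_ifs <;> push_cast <;> ring

lemma omegaTrace_eq_zero_or_eq_one : omegaTrace D = 0 ∨ omegaTrace D = 1 := by
  unfold omegaTrace; split_ifs <;> simp

lemma one_le_omegaD_sub_omegaD' (hD : 1 ≤ D) : 1 ≤ omegaD D - omegaD' D := by
  have : (1 : ℝ) ≤ Real.sqrt D := Real.one_le_sqrt.2 (by exact_mod_cast hD)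
  unfold omegaD omegaD'
  split_ifs <;> linarith

/-- Galois conjugation `x + y ω ↦ x + y ω′ = (x + y Tr ω) - y ω` in coordinates. -/
def galoisConj (D : ℤ) : ℤ × ℤ ≃+ ℤ × ℤ where
  toFun a := (a.1 + omegaTrace D * a.2, -a.2)
  invFun a := (a.1 + omegaTrace D * a.2, -a.2)
  left_inv a := by ext <;> simp
  right_inv a := by ext <;> simp
  map_add' a b := by ext <;> simp <;> ring

lemma galoisConj_apply (a : ℤ × ℤ) :
    galoisConj D a = (a.1 + omegaTrace D * a.2, -a.2) := rfl

lemma galoisConj_involutive : Function.Involutive (galoisConj D) :=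
  fun a => by ext <;> simp [galoisConj_apply]

lemma galoisConj_eq_self_iff {a : ℤ × ℤ} : galoisConj D a = a ↔ a.2 = 0 := by
  simp only [galoisConj_apply, Prod.ext_iff]
  constructor
  · rintro ⟨-, h⟩; omega
  · intro h; simp [h]

lemma emb_galoisConj (a : ℤ × ℤ) : emb D (galoisConj D a) = embConj D a := by
  simp only [emb, embConj, galoisConj_apply]; push_cast; rw [omegaTrace_cast]; ring

lemma embConj_galoisConj (a : ℤ × ℤ) : embConj D (galoisConj D a) = emb D a := by
  simp only [emb, embConj, galoisConj_apply]; push_cast; rw [omegaTrace_cast]; ring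

lemma totPos_galoisConj_iff {a : ℤ × ℤ} : TotPos D (galoisConj D a) ↔ TotPos D a := by
  simp only [TotPos, emb_galoisConj, embConj_galoisConj, and_comm]

lemma totPos_mk_zero_iff {k : ℤ} : TotPos D (k, 0) ↔ 0 < k := by
  simp [TotPos, emb, embConj]

lemma pK_galoisConj (α : ℤ × ℤ) : pK D (galoisConj D α) = pK D α :=
  Nat.card_multiset_sum_eq_congr (galoisConj D) (fun _ => totPos_galoisConj_iff) α

def intTrace (D : ℤ) : ℤ × ℤ →+ ℤ where
  toFun a := 2 * a.1 + omegaTrace D * a.2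
  map_zero' := by simp
  map_add' a b := by simp only [Prod.fst_add, Prod.snd_add]; ring

lemma intTrace_apply (a : ℤ × ℤ) : intTrace D a = 2 * a.1 + omegaTrace D * a.2 := rfl

lemma intTrace_galoisConj (a : ℤ × ℤ) : intTrace D (galoisConj D a) = intTrace D a := by
  simp only [intTrace_apply, galoisConj_apply]; ring

lemma intTrace_cast (a : ℤ × ℤ) : (intTrace D a : ℝ) = emb D a + embConj D a := by
  simp only [intTrace, AddMonoidHom.coe_mk, ZeroHom.coe_mk, emb, embConj]
  push_cast; rw [omegaTrace_cast]; ring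

lemma emb_add_embConj_eq_iff {a : ℤ × ℤ} {k : ℤ} :
    emb D a + embConj D a = k ↔ intTrace D a = k := by
  rw [← intTrace_cast]; exact Int.cast_inj

lemma TotPos.one_le_intTrace {a : ℤ × ℤ} (h : TotPos D a) : 1 ≤ intTrace D a := by
  have : (0 : ℝ) < intTrace D a := by rw [intTrace_cast]; exact add_pos h.1 h.2
  exact_mod_cast this

lemma TotPos.abs_snd_lt_intTrace (hD : 1 ≤ D) {a : ℤ × ℤ} (h : TotPos D a) :
    |a.2| < intTrace D a := by
  have hdiff : emb D a - embConj D a = a.2 * (omegaD D - omegaD' D) := by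
    simp only [emb, embConj]; ring
  have hω := one_le_omegaD_sub_omegaD' hD
  suffices (|a.2| : ℝ) < intTrace D a by exact_mod_cast this
  calc (|a.2| : ℝ) ≤ |(a.2 : ℝ)| * (omegaD D - omegaD' D) :=
        le_mul_of_one_le_right (abs_nonneg _) hω
    _ = |emb D a - embConj D a| := by rw [hdiff, abs_mul, abs_of_nonneg (zero_le_one.trans hω)]
    _ < intTrace D a := by
        rw [intTrace_cast, abs_sub_lt_iff]; constructor <;> linarith [h.1, h.2]

lemma finite_setOf_totPos_intTrace_eq (hD : 1 ≤ D) (k : ℤ) :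
    {a : ℤ × ℤ | TotPos D a ∧ intTrace D a = k}.Finite := by
  refine (Set.finite_Icc (-k, -k) (k, k)).subset ?_
  rintro a ⟨ha, htr⟩
  have hy := abs_lt.1 (ha.abs_snd_lt_intTrace hD)
  have hx := intTrace_apply (D := D) a
  rcases omegaTrace_eq_zero_or_eq_one (D := D) with ht | ht <;>
    rw [ht] at hx <;> refine ⟨⟨?_, ?_⟩, ?_, ?_⟩ <;> omega

lemma totPos_intTrace_eq_and_galoisConj_eq_self_iff {n : ℤ} (hn : 0 < n) {α : ℤ × ℤ} :
    (TotPos D α ∧ intTrace D α = 2 * n) ∧ galoisConj D α = α ↔ α = (n, 0) := by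
  rw [galoisConj_eq_self_iff]
  constructor
  · rintro ⟨⟨-, htr⟩, hsnd⟩
    rw [intTrace_apply, hsnd] at htr
    exact Prod.ext (by simp only; omega) hsnd
  · rintro rfl
    exact ⟨⟨totPos_mk_zero_iff.2 hn, by simp [intTrace_apply]⟩, rfl⟩

lemma pK_zero : pK D 0 = 1 := by
  refine Nat.card_eq_one_iff_exists.2 ⟨⟨0, by simp⟩, fun ⟨m, hpos, hsum⟩ => Subtype.ext ?_⟩
  refine Multiset.eq_zero_of_forall_notMem fun a ha => ?_
  have hle : intTrace D a ≤ (m.map (intTrace D)).sum :=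
    Multiset.single_le_sum (fun _ hmem => by
      obtain ⟨b, hb, rfl⟩ := Multiset.mem_map.1 hmem
      exact zero_le_one.trans (hpos b hb).one_le_intTrace) _ (Multiset.mem_map_of_mem _ ha)
  rw [← map_multiset_sum, hsum, map_zero] at hle
  exact absurd (hpos a ha).one_le_intTrace (by omega)

end RealQuadratic

theorem PK_modEq_pK_general (D : ℤ) (hD : 2 ≤ D) (n : ℕ) :
    PK D n ≡ pK D ((n : ℤ), 0) [MOD 2] := by
  classical
  rcases eq_or_ne n 0 with rfl | hn
  · rw [PK, if_pos rfl, Nat.cast_zero, Prod.mk_zero_zero, pK_zero]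
  have hS : {α : ℤ × ℤ | TotPos D α ∧ emb D α + embConj D α = 2 * n}
      = {α | TotPos D α ∧ intTrace D α = 2 * n} := by
    ext α; simp only [Set.mem_ofPred_eq, ← emb_add_embConj_eq_iff]; push_cast; rfl
  have hfin := finite_setOf_totPos_intTrace_eq (by omega : 1 ≤ D) (2 * n)
  have hfixed : hfin.toFinset.filter (fun α => galoisConj D α = α) = {((n : ℤ), 0)} := by
    ext α
    simp only [Finset.mem_filter, Set.Finite.mem_toFinset, Set.mem_ofPred_eq,
      Finset.mem_singleton]
    exact totPos_intTrace_eq_and_galoisConj_eq_self_iff (by omega)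
  rw [PK, if_neg hn, hS, finsum_mem_eq_finite_toFinset_sum _ hfin,
    ← ZMod.natCast_eq_natCast_iff, Nat.cast_sum,
    Finset.sum_eq_sum_filter_fixed_of_involutive _ _ galoisConj_involutive, hfixed,
    Finset.sum_singleton]
  · intro α hα
    simp only [Set.Finite.mem_toFinset, Set.mem_ofPred_eq] at hα ⊢
    exact ⟨totPos_galoisConj_iff.2 hα.1, by rw [intTrace_galoisConj, hα.2]⟩
  · intro α; rw [pK_galoisConj]

theorem PK_modEq_pK (D : ℤ) (hD : 2 ≤ D) (hsf : Squarefree D) (n : ℕ) :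
    PK D n ≡ pK D ((n : ℤ), 0) [MOD 2] :=
  PK_modEq_pK_general D hD n
end

section
/- Let D ≥ 2 be a squarefree integer and K = ℚ(√D). For every m ∈ ℤ≥1 there exists y ∈ ℤ≥0 such that p_K(⌈yξ_D⌉ + yω_D) ≥ m. -/
theorem Irrational.exists_pos_nat_ceil_sub_lt {ξ : ℝ} (hξ : Irrational ξ) {ε : ℝ} (hε : 0 < ε) :
    ∃ k : ℕ, 0 < k ∧ 0 < ⌈k * ξ⌉ - k * ξ ∧ ⌈k * ξ⌉ - k * ξ < ε := by
  suffices ∃ k : ℕ, 0 < k ∧ ⌈k * ξ⌉ - k * ξ < ε by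
    obtain ⟨k, hk, hlt⟩ := this
    exact ⟨k, hk, sub_pos.2 ((Int.le_ceil _).lt_of_ne ((hξ.natCast_mul hk.ne').ne_int _)), hlt⟩
  obtain ⟨n, hn⟩ := exists_nat_one_div_lt hε
  obtain ⟨k, hk, -, hkξ⟩ := Real.exists_nat_abs_mul_sub_round_le ξ n.succ_pos
  set j := round (k * ξ)
  set s := k * ξ - j
  have hs_lt : |s| < ε := hkξ.trans_lt <| lt_of_le_of_lt
    (one_div_le_one_div_of_le (by positivity) (by push_cast; linarith)) hn
  have hs_lt_one : |s| < 1 :=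
    hkξ.trans_lt <| (div_lt_one (by positivity)).2 (by push_cast; linarith)
  rcases (sub_ne_zero.2 ((hξ.natCast_mul hk.ne').ne_int j) : s ≠ 0).lt_or_gt with hs | hs
  · rw [abs_of_neg hs] at hs_lt
    have : (⌈k * ξ⌉ : ℝ) ≤ j := by exact_mod_cast Int.ceil_le.2 (by linarith)
    exact ⟨k, hk, by linarith⟩
  -- `N = ⌊1/s⌋` puts `N * k * ξ = N * j + N * s` less than `s` below the integer `N * j + 1`.
  rw [abs_of_pos hs] at hs_lt hs_lt_one
  set N := ⌊s⁻¹⌋₊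
  have hN_le : N * s ≤ 1 := by
    calc N * s ≤ s⁻¹ * s := by gcongr; exact Nat.floor_le (inv_pos.2 hs).le
      _ = 1 := inv_mul_cancel₀ hs.ne'
  have hN_gt : 1 < (N + 1) * s := by
    calc (1 : ℝ) = s⁻¹ * s := (inv_mul_cancel₀ hs.ne').symm
      _ < (N + 1) * s := by gcongr; exact Nat.lt_floor_add_one _
  have hN : 0 < N := by
    have : (0 : ℝ) < N := by nlinarith
    exact_mod_cast this
  have hNkξ : ((N * k : ℕ) : ℝ) * ξ = N * j + N * s := by push_cast; ring
  have hceil : (⌈((N * k : ℕ) : ℝ) * ξ⌉ : ℝ) ≤ N * j + 1 := by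
    exact_mod_cast Int.ceil_le.2 (by push_cast; linarith)
  exact ⟨N * k, Nat.mul_pos hN hk, by linarith⟩

lemma Multiset.setOf_forall_mem_card_le_finite {α : Type*} (T : Finset α) (N : ℕ) :
    {s : Multiset α | (∀ a ∈ s, a ∈ T) ∧ Multiset.card s ≤ N}.Finite := by
  classical
  refine (Multiset.powerset (N • T.val)).toFinset.finite_toSet.subset fun s ⟨hT, hN⟩ => ?_
  simp only [Finset.mem_coe, Multiset.mem_toFinset, Multiset.mem_powerset, Multiset.le_iff_count]
  intro a
  by_cases ha : a ∈ s
  · rw [Multiset.count_nsmul, Multiset.count_eq_one_of_mem T.nodup (hT a ha), mul_one]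
    exact (Multiset.count_le_card a s).trans hN
  · simp [Multiset.count_eq_zero_of_notMem ha]

lemma Int.ceil_natCast_mul_of_mul_lt_one {x : ℝ} {n : ℕ} (h : n * (⌈x⌉ - x) < 1) :
    ⌈n * x⌉ = n * ⌈x⌉ := by
  rw [Int.ceil_eq_iff]
  have := Int.le_ceil x
  push_cast
  constructor <;> nlinarith [(n.cast_nonneg : (0 : ℝ) ≤ n)]

section QuadraticField

variable {D : ℤ}

lemma one_lt_sqrt_of_two_le (hD : 2 ≤ D) : 1 < Real.sqrt D :=
  Real.lt_sqrt_of_sq_lt (by norm_num; exact_mod_cast hD)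

lemma xiD_pos (hD : 2 ≤ D) : 0 < xiD D := by
  have := one_lt_sqrt_of_two_le hD
  unfold xiD omegaD'
  split_ifs <;> linarith

lemma omegaD_pos (hD : 2 ≤ D) : 0 < omegaD D := by
  have := one_lt_sqrt_of_two_le hD
  unfold omegaD
  split_ifs <;> linarith

lemma irrational_xiD (hD : 2 ≤ D) (hsf : Squarefree D) : Irrational (xiD D) := by
  have hsqrt : Irrational (Real.sqrt D) := by
    rw [irrational_sqrt_intCast_iff_of_nonneg (by omega)]
    rintro ⟨a, rfl⟩
    rcases Int.isUnit_iff.1 (hsf a dvd_rfl) with rfl | rfl <;> norm_num at hD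
  unfold xiD omegaD'
  split_ifs
  · rw [show -((1 - Real.sqrt D) / 2) = (Real.sqrt D - (1 : ℤ)) / (2 : ℕ) by push_cast; ring]
    exact (hsqrt.sub_intCast 1).div_natCast two_ne_zero
  · simpa using hsqrt

lemma embConj_eq (a : ℤ × ℤ) : embConj D a = a.1 - a.2 * xiD D := by
  unfold embConj xiD; ring

noncomputable def embConjAddHom (D : ℤ) : ℤ × ℤ →+ ℝ :=
  AddMonoidHom.mk' (embConj D) fun a b => by
    simp only [embConj, Prod.fst_add, Prod.snd_add, Int.cast_add]; ring

lemma emb_nsmul (n : ℕ) (a : ℤ × ℤ) : emb D (n • a) = n * emb D a := by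
  rw [emb, emb, Prod.smul_fst, Prod.smul_snd, nsmul_eq_mul, nsmul_eq_mul, Int.cast_mul,
    Int.cast_mul, Int.cast_natCast]
  ring

lemma embConj_nsmul (n : ℕ) (a : ℤ × ℤ) : embConj D (n • a) = n * embConj D a := by
  rw [embConj, embConj, Prod.smul_fst, Prod.smul_snd, nsmul_eq_mul, nsmul_eq_mul, Int.cast_mul,
    Int.cast_mul, Int.cast_natCast]
  ring

lemma TotPos.nsmul {a : ℤ × ℤ} (ha : TotPos D a) {n : ℕ} (hn : 0 < n) : TotPos D (n • a) := by
  rw [TotPos, emb_nsmul, embConj_nsmul]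
  exact ⟨by have := ha.1; positivity, by have := ha.2; positivity⟩

lemma TotPos.snd_pos {β : ℤ × ℤ} (hD : 2 ≤ D) (hβ : TotPos D β) (h1 : embConj D β < 1) :
    0 < β.2 := by
  by_contra! hy
  have hy' : (β.2 : ℝ) ≤ 0 := by exact_mod_cast hy
  have hx : (0 : ℝ) < β.1 := by
    have := hβ.1
    unfold emb at this
    nlinarith [omegaD_pos hD]
  have hx' : (1 : ℝ) ≤ β.1 := by exact_mod_cast (show (0 : ℤ) < β.1 by exact_mod_cast hx)
  rw [embConj_eq] at h1
  nlinarith [xiD_pos hD]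

lemma fst_eq_ceil {β : ℤ × ℤ} (h0 : 0 < embConj D β) (h1 : embConj D β < 1) :
    β.1 = ⌈β.2 * xiD D⌉ := by
  rw [embConj_eq] at h0 h1
  exact (Int.ceil_eq_iff.2 ⟨by linarith, by linarith⟩).symm

lemma totPos_ceil_mul_xiD (hD : 2 ≤ D) {k : ℕ} (hk : 0 < k) (hpos : 0 < ⌈k * xiD D⌉ - k * xiD D) :
    TotPos D (⌈k * xiD D⌉, k) := by
  have : (0 : ℝ) < ⌈k * xiD D⌉ := by
    have := xiD_pos hD
    exact_mod_cast Int.ceil_pos.2 (by positivity)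
  refine ⟨?_, by rwa [embConj_eq]⟩
  have := omegaD_pos hD
  simp only [emb, Int.cast_natCast]
  positivity

def partitions (D : ℤ) (α : ℤ × ℤ) : Set (Multiset (ℤ × ℤ)) :=
  {m | (∀ β ∈ m, TotPos D β) ∧ m.sum = α}

lemma pK_eq_card_partitions (α : ℤ × ℤ) : pK D α = Nat.card (partitions D α) := rfl

section partitions

variable {α β : ℤ × ℤ} {m : Multiset (ℤ × ℤ)}

lemma embConj_le_of_mem_partitions (hm : m ∈ partitions D α) (hβ : β ∈ m) :
    embConj D β ≤ embConj D α := by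
  have hsum : embConj D α = (m.map (embConj D)).sum := by
    rw [← hm.2]; exact map_multiset_sum (embConjAddHom D) m
  rw [hsum]
  refine Multiset.single_le_sum (fun r hr => ?_) _ (Multiset.mem_map_of_mem _ hβ)
  obtain ⟨γ, hγ, rfl⟩ := Multiset.mem_map.1 hr
  exact (hm.1 γ hγ).2.le

lemma sum_snd_of_mem_partitions (hm : m ∈ partitions D α) : (m.map Prod.snd).sum = α.2 := by
  rw [← hm.2]; exact (map_multiset_sum (AddMonoidHom.snd ℤ ℤ) m).symm

lemma snd_pos_of_mem_partitions (hD : 2 ≤ D) (hα : embConj D α < 1) (hm : m ∈ partitions D α)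
    (hβ : β ∈ m) : 0 < β.2 :=
  (hm.1 β hβ).snd_pos hD ((embConj_le_of_mem_partitions hm hβ).trans_lt hα)

lemma mem_image_ceil_of_mem_partitions (hD : 2 ≤ D) (hα : embConj D α < 1)
    (hm : m ∈ partitions D α) (hβ : β ∈ m) :
    β ∈ (Finset.Icc 1 α.2).image fun y : ℤ => (⌈y * xiD D⌉, y) := by
  have hnonneg : ∀ y ∈ m.map Prod.snd, 0 ≤ y := by
    simp only [Multiset.mem_map]
    rintro _ ⟨γ, hγ, rfl⟩
    exact (snd_pos_of_mem_partitions hD hα hm hγ).le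
  have hle : β.2 ≤ α.2 := by
    rw [← sum_snd_of_mem_partitions hm]
    exact Multiset.single_le_sum hnonneg _ (Multiset.mem_map_of_mem _ hβ)
  refine Finset.mem_image.2
    ⟨β.2, Finset.mem_Icc.2 ⟨snd_pos_of_mem_partitions hD hα hm hβ, hle⟩, ?_⟩
  rw [← fst_eq_ceil (hm.1 β hβ).2 ((embConj_le_of_mem_partitions hm hβ).trans_lt hα)]

lemma card_le_of_mem_partitions (hD : 2 ≤ D) (hα : embConj D α < 1)
    (hm : m ∈ partitions D α) : (Multiset.card m : ℤ) ≤ α.2 := by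
  have := Multiset.card_nsmul_le_sum (a := (1 : ℤ)) (s := m.map Prod.snd) (by
    simp only [Multiset.mem_map]
    rintro _ ⟨γ, hγ, rfl⟩
    exact snd_pos_of_mem_partitions hD hα hm hγ)
  rwa [sum_snd_of_mem_partitions hm, Multiset.card_map, nsmul_one] at this

end partitions

lemma partitions_finite_of_embConj_lt_one {α : ℤ × ℤ} (hD : 2 ≤ D) (hα : embConj D α < 1) :
    (partitions D α).Finite :=
  (Multiset.setOf_forall_mem_card_le_finite _ α.2.toNat).subset fun _ hm =>
    ⟨fun _ hβ => mem_image_ceil_of_mem_partitions hD hα hm hβ,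
      by have := card_le_of_mem_partitions hD hα hm; omega⟩

/-- The partitions `(n - j) • γ + j • γ` for `j < n` are distinct, having `j + 1` parts. -/
lemma le_pK_nsmul {γ : ℤ × ℤ} (hγ : TotPos D γ) (n : ℕ) (hfin : (partitions D (n • γ)).Finite) :
    n ≤ pK D (n • γ) := by
  have : Finite (partitions D (n • γ)) := hfin.to_subtype
  let f : Fin n → partitions D (n • γ) := fun j =>
    ⟨(n - j) • γ ::ₘ Multiset.replicate j γ, by
      refine ⟨fun β hβ => ?_, ?_⟩
      · rcases Multiset.mem_cons.1 hβ with rfl | hβ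
        · exact hγ.nsmul (by omega)
        · rwa [Multiset.eq_of_mem_replicate hβ]
      · rw [Multiset.sum_cons, Multiset.sum_replicate, ← add_nsmul, Nat.sub_add_cancel j.isLt.le]⟩
  have hf : Function.Injective f := fun i j hij => by
    have := congrArg (Multiset.card ∘ Subtype.val) hij
    simp only [f, Function.comp_apply, Multiset.card_cons, Multiset.card_replicate] at this
    exact Fin.ext (by omega)
  simpa [pK_eq_card_partitions] using Nat.card_le_card_of_injective f hf

end QuadraticField

theorem exists_y_pK_ge_general (D : ℤ) (hD : 2 ≤ D) (hsf : Squarefree D)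
    (m : ℕ) :
    ∃ y : ℕ, m ≤ pK D (⌈(y : ℝ) * xiD D⌉, (y : ℤ)) := by
  obtain ⟨k, hk, hpos, hlt⟩ :=
    (irrational_xiD hD hsf).exists_pos_nat_ceil_sub_lt (ε := 1 / (m + 1)) (by positivity)
  have hsmall : m * (⌈k * xiD D⌉ - k * xiD D) < 1 := by
    calc _ ≤ (m : ℝ) * (1 / (m + 1)) := by gcongr
      _ < 1 := by rw [mul_one_div, div_lt_one (by positivity)]; linarith
  set γ : ℤ × ℤ := (⌈k * xiD D⌉, k)
  have hγ : TotPos D γ := totPos_ceil_mul_xiD hD hk hpos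
  have hα : (⌈((m * k : ℕ) : ℝ) * xiD D⌉, ((m * k : ℕ) : ℤ)) = m • γ := by
    rw [Nat.cast_mul, mul_assoc, Int.ceil_natCast_mul_of_mul_lt_one hsmall]
    ext <;> simp [γ]
  refine ⟨m * k, hα ▸ le_pK_nsmul hγ m (partitions_finite_of_embConj_lt_one hD ?_)⟩
  rw [embConj_nsmul, embConj_eq]
  simpa [γ] using hsmall

theorem exists_y_pK_ge (D : ℤ) (hD : 2 ≤ D) (hsf : Squarefree D)
    (m : ℕ) (hm : 1 ≤ m) :
    ∃ y : ℕ, m ≤ pK D (⌈(y : ℝ) * xiD D⌉, (y : ℤ)) :=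
  exists_y_pK_ge_general D hD hsf m
end

section
/- Let D ≥ 2 be a squarefree integer and K = ℚ(√D), and let α = (⌈yξ_D⌉ + k) + yω_D with y, k ∈ ℤ≥0 not both zero. If α/α′ ≤ ε₊, where α′ is the Galois conjugate of α, then y < ((k+1)ε₊ − k)/(ξ_D + ω_D). -/
/-- `ε₊`, the smallest totally positive unit of `𝓞 K` greater than `1`,
viewed as a real number. -/
noncomputable def epsPlus (D : ℤ) : ℝ :=
  sInf {x : ℝ | 1 < x ∧ ∃ u : ℤ × ℤ, TotPos D u ∧ emb D u * embConj D u = 1 ∧ emb D u = x}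

lemma lt_succ_mul_sub_of_add_div_le {a f k ε : ℝ} (ha : 0 ≤ a) (hf : f < 1)
    (hfk : 0 < f + k) (h : (f + k + a) / (f + k) ≤ ε) : a < (k + 1) * ε - k := by
  rw [div_le_iff₀ hfk] at h
  have hε : 1 ≤ ε := by nlinarith
  nlinarith

lemma Squarefree.isUnit_of_isSquare {M : Type*} [Monoid M] {x : M} (hsf : Squarefree x)
    (hsq : IsSquare x) : IsUnit x := by
  obtain ⟨r, rfl⟩ := hsq
  have hr := hsf r dvd_rfl
  exact hr.mul hr

lemma irrational_sqrt_of_squarefree {D : ℤ} (hD : 2 ≤ D) (hsf : Squarefree D) :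
    Irrational √(D : ℝ) := by
  refine irrational_sqrt_intCast_iff.2 ⟨fun hsq => ?_, by omega⟩
  rcases Int.isUnit_iff.1 (hsf.isUnit_of_isSquare hsq) with h | h <;> omega

lemma Int.ceil_sub_self_pos {x : ℝ} (hx : Irrational x) : 0 < (⌈x⌉ : ℝ) - x :=
  (sub_nonneg.2 (Int.le_ceil x)).lt_of_ne fun h => hx.ne_int ⌈x⌉ (by linarith)

lemma irrational_xiD_s18 {D : ℤ} (h : Irrational √(D : ℝ)) : Irrational (xiD D) := by
  unfold xiD omegaD'
  split_ifs
  · have hξ : -((1 - √(D : ℝ)) / 2) = (√(D : ℝ) - (1 : ℤ)) / (2 : ℕ) := by push_cast; ring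
    rw [hξ]
    exact (h.sub_intCast 1).div_natCast two_ne_zero
  · simpa using h

lemma xiD_add_omegaD_pos {D : ℤ} (hD : 0 < D) : 0 < xiD D + omegaD D := by
  have hs : 0 < √(D : ℝ) := Real.sqrt_pos.2 (by exact_mod_cast hD)
  unfold xiD omegaD omegaD'
  split_ifs <;> linarith

lemma embConj_eq_sub (D : ℤ) (a : ℤ × ℤ) : embConj D a = a.1 - a.2 * xiD D := by
  simp only [embConj, xiD, mul_neg, sub_neg_eq_add]

lemma emb_eq_embConj_add (D : ℤ) (a : ℤ × ℤ) :
    emb D a = embConj D a + a.2 * (xiD D + omegaD D) := by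
  rw [embConj_eq_sub]
  simp only [emb]
  ring

theorem y_bound_of_ratio_le_epsPlus (D : ℤ) (hD : 2 ≤ D) (hsf : Squarefree D)
    (y k : ℕ) (hyk : ¬(y = 0 ∧ k = 0))
    (h : emb D (⌈(y : ℝ) * xiD D⌉ + (k : ℤ), (y : ℤ)) /
          embConj D (⌈(y : ℝ) * xiD D⌉ + (k : ℤ), (y : ℤ)) ≤ epsPlus D) :
    (y : ℝ) < (((k : ℝ) + 1) * epsPlus D - (k : ℝ)) / (xiD D + omegaD D) := by
  have ht := xiD_add_omegaD_pos (D := D) (by omega)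
  set f : ℝ := ⌈(y : ℝ) * xiD D⌉ - y * xiD D
  have hf : f < 1 := by linarith [Int.ceil_lt_add_one ((y : ℝ) * xiD D)]
  have hfk : 0 < f + k := by
    rcases Nat.eq_zero_or_pos k with rfl | hk
    · have hy : y ≠ 0 := by omega
      simp only [Nat.cast_zero, add_zero]
      exact Int.ceil_sub_self_pos
        ((irrational_xiD_s18 (irrational_sqrt_of_squarefree hD hsf)).natCast_mul hy)
    · linarith [Int.le_ceil ((y : ℝ) * xiD D), (Nat.one_le_cast (α := ℝ)).2 hk]
  have hconj : embConj D (⌈(y : ℝ) * xiD D⌉ + (k : ℤ), (y : ℤ)) = f + k := by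
    rw [embConj_eq_sub]
    push_cast
    ring
  rw [emb_eq_embConj_add, hconj] at h
  rw [lt_div_iff₀ ht]
  exact lt_succ_mul_sub_of_add_div_le (by positivity) hf hfk (by exact_mod_cast h)
end
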